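/- arXiv:1611.08566 — 5 statements merged into one kernel-verified Lean document; each statement's English description precedes it below -/
import Mathlib

section
/- Let R be a commutative ring, n ≥ 1, and let M ∈ Mₙ(R) be a matrix with M_{i,i+1} = 1 for all 0 ≤ i ≤ n−2 and M_{i,j} = 0 whenever j > i+1. Then there exists a unique pair (U, C), where U ∈ Mₙ(R) is lower triangular with all diagonal entries equal to 1 and C is a companion-type matrix, such that U M U⁻¹ = C. -/
open Matrix Finset

private lemma stmt0_aux {R : Type*} [CommRing R] {n : ℕ} (hn : 1 ≤ n)
    (M : Matrix (Fin n) (Fin n) R)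
    (hM1 : ∀ i j : Fin n, (j : ℕ) = (i : ℕ) + 1 → M i j = 1)
    (hM0 : ∀ i j : Fin n, (i : ℕ) + 1 < (j : ℕ) → M i j = 0) :
    ∀ k : ℕ, ∀ j : Fin n,
      (k < (j : ℕ) → (M ^ k) ⟨0, hn⟩ j = 0) ∧ ((j : ℕ) = k → (M ^ k) ⟨0, hn⟩ j = 1) := by
  intro k
  induction k with
  | zero =>
    intro j
    constructor
    · intro hj
      rw [pow_zero, Matrix.one_apply_ne]
      intro h
      rw [← h] at hj
      simp at hj
    · intro hj
      have : j = ⟨0, hn⟩ := Fin.ext (by simpa using hj)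
      rw [this, pow_zero, Matrix.one_apply_eq]
  | succ k ih =>
    intro j
    rw [pow_succ]
    constructor
    · intro hj
      rw [Matrix.mul_apply]
      refine Finset.sum_eq_zero fun m _ => ?_
      rcases lt_or_ge k (m : ℕ) with h | h
      · rw [(ih m).1 h, zero_mul]
      · rw [hM0 m j (by omega), mul_zero]
    · intro hj
      have hk : k < n := by omega
      rw [Matrix.mul_apply, Finset.sum_eq_single ⟨k, hk⟩]
      · rw [(ih ⟨k, hk⟩).2 rfl, hM1 ⟨k, hk⟩ j (by simpa using hj), one_mul]
      · intro m _ hm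
        rcases lt_or_ge k (m : ℕ) with h | h
        · rw [(ih m).1 h, zero_mul]
        · have hlt : (m : ℕ) < k := lt_of_le_of_ne h fun h' => hm (Fin.ext h')
          rw [hM0 m j (by omega), mul_zero]
      · exact fun h => absurd (Finset.mem_univ _) h

/-- Over a commutative ring `R`, if `M ∈ Mₙ(R)` has `1`s on the
superdiagonal (`M i (i+1) = 1`) and `0`s strictly above it (`M i j = 0` for `j > i+1`),
then there is a unique pair `(U, C)` with `U` lower triangular with all diagonal entries
equal to `1`, and `C` a companion-type matrix (`C i (i+1) = 1` for `i ≤ n-2`, arbitrary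
bottom row, all other entries `0`), such that `U * M * U⁻¹ = C`. -/
theorem stmt0 {R : Type*} [CommRing R] (n : ℕ) (hn : 1 ≤ n)
    (M : Matrix (Fin n) (Fin n) R)
    (hM1 : ∀ i j : Fin n, (j : ℕ) = (i : ℕ) + 1 → M i j = 1)
    (hM0 : ∀ i j : Fin n, (i : ℕ) + 1 < (j : ℕ) → M i j = 0) :
    ∃! UC : Matrix (Fin n) (Fin n) R × Matrix (Fin n) (Fin n) R,
      (∀ i : Fin n, UC.1 i i = 1) ∧
      (∀ i j : Fin n, (i : ℕ) < (j : ℕ) → UC.1 i j = 0) ∧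
      (∀ i j : Fin n, (i : ℕ) + 1 < n →
        UC.2 i j = if (j : ℕ) = (i : ℕ) + 1 then 1 else 0) ∧
      UC.1 * M * (UC.1)⁻¹ = UC.2 := by
  have aux := stmt0_aux hn M hM1 hM0
  set U : Matrix (Fin n) (Fin n) R := fun i j => (M ^ (i : ℕ)) ⟨0, hn⟩ j with hUdef
  have hUapp : ∀ i j : Fin n, U i j = (M ^ (i : ℕ)) ⟨0, hn⟩ j := fun _ _ => rfl
  have hUdiag : ∀ i : Fin n, U i i = 1 := fun i => (aux i i).2 rfl
  have hUlow : ∀ i j : Fin n, (i : ℕ) < (j : ℕ) → U i j = 0 := fun i j h => (aux i j).1 h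
  -- determinant of a lower unitriangular matrix is a unit
  have hdetAux : ∀ V : Matrix (Fin n) (Fin n) R, (∀ i : Fin n, V i i = 1) →
      (∀ i j : Fin n, (i : ℕ) < (j : ℕ) → V i j = 0) → IsUnit V.det := by
    intro V hd hl
    have : V.det = ∏ i, V i i := by
      apply Matrix.det_of_lowerTriangular
      intro i j hij
      exact hl i j (by exact_mod_cast hij)
    rw [this]
    simp [hd]
  have hUdet : IsUnit U.det := hdetAux U hUdiag hUlow
  have hUUinv : U * U⁻¹ = 1 := Matrix.mul_nonsing_inv U hUdet
  -- key row recurrence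
  have hrow : ∀ (i : Fin n) (hi : (i : ℕ) + 1 < n) (j : Fin n),
      (U * M) i j = U ⟨(i : ℕ) + 1, hi⟩ j := by
    intro i hi j
    rw [Matrix.mul_apply, hUapp, pow_succ, Matrix.mul_apply]
  set C : Matrix (Fin n) (Fin n) R := U * M * U⁻¹ with hCdef
  have hCrow : ∀ i j : Fin n, (i : ℕ) + 1 < n →
      C i j = if (j : ℕ) = (i : ℕ) + 1 then 1 else 0 := by
    intro i j hi
    have : C i j = ∑ k, (U * M) i k * U⁻¹ k j := by
      rw [hCdef, Matrix.mul_apply]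
    rw [this]
    have h2 : ∑ k, (U * M) i k * U⁻¹ k j = ∑ k, U ⟨(i : ℕ) + 1, hi⟩ k * U⁻¹ k j :=
      Finset.sum_congr rfl fun k _ => by rw [hrow i hi k]
    rw [h2, ← Matrix.mul_apply, hUUinv, Matrix.one_apply]
    congr 1
    simp [Fin.ext_iff, eq_comm]
  refine ⟨(U, C), ⟨hUdiag, hUlow, hCrow, rfl⟩, ?_⟩
  rintro ⟨V, D⟩ ⟨hVd, hVl, hDrow, hVMD⟩
  dsimp only at hVd hVl hDrow hVMD
  have hVdet : IsUnit V.det := hdetAux V hVd hVl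
  have hDV : D * V = V * M := by
    rw [← hVMD, Matrix.mul_assoc (V * M), Matrix.nonsing_inv_mul V hVdet, Matrix.mul_one]
  have hVU : ∀ (k : ℕ) (hk : k < n) (j : Fin n), V ⟨k, hk⟩ j = U ⟨k, hk⟩ j := by
    intro k
    induction k with
    | zero =>
      intro hk j
      rcases Nat.eq_zero_or_pos (j : ℕ) with h | h
      · have hj : j = ⟨0, hk⟩ := Fin.ext h
        rw [hj, hVd, hUdiag]
      · rw [hVl ⟨0, hk⟩ j h, hUlow ⟨0, hk⟩ j h]
    | succ k ih =>
      intro hk j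
      have hk' : k < n := by omega
      have h1 : (D * V) ⟨k, hk'⟩ j = V ⟨k + 1, hk⟩ j := by
        rw [Matrix.mul_apply, Finset.sum_eq_single ⟨k + 1, hk⟩]
        · rw [hDrow _ _ (by simpa using hk)]
          simp
        · intro m _ hm
          rw [hDrow _ _ (by simpa using hk), if_neg, zero_mul]
          intro h
          exact hm (Fin.ext (by simpa using h))
        · exact fun h => absurd (Finset.mem_univ _) h
      have h2 : (V * M) ⟨k, hk'⟩ j = (U * M) ⟨k, hk'⟩ j := by
        rw [Matrix.mul_apply, Matrix.mul_apply]
        exact Finset.sum_congr rfl fun m _ => by rw [ih hk' m]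
      have h3 := hrow ⟨k, hk'⟩ (by simpa using hk) j
      have h4 : (D * V) ⟨k, hk'⟩ j = (V * M) ⟨k, hk'⟩ j := by rw [hDV]
      rw [← h1, h4, h2, h3]
  have hVeqU : V = U := by
    ext i j
    have := hVU i i.isLt j
    simpa using this
  have hDeqC : D = C := by rw [← hVMD, hVeqU, hCdef]
  rw [Prod.mk.injEq]
  exact ⟨hVeqU, hDeqC⟩
end

section
/- Let R be a commutative ring, let σ be a finite set of variables, and let φ be an R-algebra endomorphism of the multivariate polynomial ring R[xₛ : s ∈ σ] such that for every s ∈ σ, every monomial appearing in φ(xₛ) − xₛ has total degree at least 2. Then φ is injective. -/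
open MvPolynomial

/-!
Write `I` for the ideal generated by the variables, so that `p ∈ I ^ n` says that every monomial
of `p` has degree at least `n`. The hypothesis says `φ (X s) - X s ∈ I ^ 2`. Since
`φ (a * b) - a * b = (φ a - a) * φ b + a * (φ b - b)`, this propagates to `φ p - p ∈ I ^ (n + 1)`
for every `p ∈ I ^ n`. A nonzero `p` lies in some `I ^ n` but not in `I ^ (n + 1)`, so `φ p ≠ 0`.
-/

namespace Ideal

variable {A : Type*} [CommRing A] (f : A →+* A)

theorem map_mul_sub_mul (a b : A) : f (a * b) - a * b = (f a - a) * f b + a * (f b - b) := by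
  rw [map_mul]
  ring

theorem map_sub_self_mem_sq_of_mem_span {s : Set A} (h0 : ∀ a, f a - a ∈ span s)
    (hs : ∀ x ∈ s, f x - x ∈ span s ^ 2) {a : A} (ha : a ∈ span s) : f a - a ∈ span s ^ 2 := by
  induction ha using Submodule.span_induction with
  | mem x hx => exact hs x hx
  | zero => simp
  | add x y _ _ hx hy =>
    rw [map_add, add_sub_add_comm]
    exact add_mem hx hy
  | smul c x hxs hx =>
    have hfx : f x ∈ span s := by
      simpa using add_mem hxs (pow_le_self two_ne_zero hx)
    rw [smul_eq_mul, map_mul_sub_mul]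
    refine add_mem ?_ (mul_mem_left _ _ hx)
    rw [sq]
    exact mul_mem_mul (h0 c) hfx

theorem map_sub_self_mem_pow_succ {I : Ideal A} (h0 : ∀ a, f a - a ∈ I)
    (h1 : ∀ a ∈ I, f a - a ∈ I ^ 2) (n : ℕ) {a : A} (ha : a ∈ I ^ n) :
    f a - a ∈ I ^ (n + 1) := by
  induction n generalizing a with
  | zero => simpa using h0 a
  | succ n ih =>
    rw [pow_succ] at ha
    induction ha using Submodule.mul_induction_on' with
    | mem_mul_mem x hx y hy =>
      have hfy : f y ∈ I := by
        simpa using add_mem hy (pow_le_self two_ne_zero (h1 y hy))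
      rw [map_mul_sub_mul]
      refine add_mem ?_ ?_
      · rw [pow_succ _ (n + 1)]
        exact mul_mem_mul (ih hx) hfy
      · rw [show n + 1 + 1 = n + 2 by rfl, pow_add]
        exact mul_mem_mul hx (h1 y hy)
    | add x _ y _ hx hy =>
      rw [map_add, add_sub_add_comm]
      exact add_mem hx hy

end Ideal

namespace MvPolynomial

variable {R : Type*} [CommRing R] {σ : Type*}

theorem sub_mem_idealOfVars_iff {p q : MvPolynomial σ R} :
    p - q ∈ idealOfVars σ R ↔ constantCoeff p = constantCoeff q := by
  rw [← pow_one (idealOfVars σ R), mem_pow_idealOfVars_iff']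
  simp [Finsupp.degree_eq_zero_iff, sub_eq_zero, constantCoeff_eq]

theorem map_sub_self_mem_idealOfVars (φ : MvPolynomial σ R →ₐ[R] MvPolynomial σ R)
    (h : ∀ s, φ (X s) - X s ∈ idealOfVars σ R) (p : MvPolynomial σ R) :
    φ p - p ∈ idealOfVars σ R := by
  have hφ : constantCoeff.comp (φ : MvPolynomial σ R →+* MvPolynomial σ R) = constantCoeff :=
    ringHom_ext (by simp [← algebraMap_eq]) fun s => sub_mem_idealOfVars_iff.1 (h s)
  exact sub_mem_idealOfVars_iff.2 congr($hφ p)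

theorem exists_mem_pow_idealOfVars_notMem_succ {p : MvPolynomial σ R} (hp : p ≠ 0) :
    ∃ n, p ∈ idealOfVars σ R ^ n ∧ p ∉ idealOfVars σ R ^ (n + 1) := by
  classical
  obtain ⟨d, hd⟩ := support_nonempty.mpr hp
  have hex : ∃ n, p ∉ idealOfVars σ R ^ n :=
    ⟨d.degree + 1, fun h => by have := (mem_pow_idealOfVars_iff _ p).1 h d hd; omega⟩
  obtain ⟨_ | n, hn, hmin⟩ : ∃ n, p ∉ idealOfVars σ R ^ n ∧ ∀ m < n, p ∈ idealOfVars σ R ^ m :=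
    ⟨Nat.find hex, Nat.find_spec hex, fun m hm => not_not.1 (Nat.find_min hex hm)⟩
  · simp at hn
  · exact ⟨n, hmin n n.lt_succ_self, hn⟩

end MvPolynomial

theorem stmt1_general {R : Type*} [CommRing R] {σ : Type*}
    (φ : MvPolynomial σ R →ₐ[R] MvPolynomial σ R)
    (h : ∀ s : σ, ∀ d ∈ (φ (X s) - X s).support, 2 ≤ d.sum fun _ e => e) :
    Function.Injective φ := by
  set I := idealOfVars σ R
  have hX : ∀ s, φ (X s) - X s ∈ I ^ 2 := fun s => (mem_pow_idealOfVars_iff 2 _).2 (h s)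
  have h0 : ∀ p, φ p - p ∈ I :=
    map_sub_self_mem_idealOfVars φ fun s => Ideal.pow_le_self two_ne_zero (hX s)
  have h1 : ∀ p ∈ I, φ p - p ∈ I ^ 2 := fun p hp =>
    Ideal.map_sub_self_mem_sq_of_mem_span (φ : MvPolynomial σ R →+* MvPolynomial σ R) h0
      (by rintro _ ⟨s, rfl⟩; exact hX s) hp
  rw [injective_iff_map_eq_zero]
  intro p hφp
  by_contra hp
  obtain ⟨n, hn, hn1⟩ := exists_mem_pow_idealOfVars_notMem_succ hp
  have hsub := Ideal.map_sub_self_mem_pow_succ (φ : MvPolynomial σ R →+* MvPolynomial σ R) h0 h1 n hn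
  rw [RingHom.coe_coe, hφp, zero_sub, neg_mem_iff] at hsub
  exact hn1 hsub

/-- Let `R` be a commutative ring, `σ` a finite set of variables, and
`φ` an `R`-algebra endomorphism of `R[xₛ : s ∈ σ]` such that every monomial appearing in
`φ(xₛ) - xₛ` has total degree at least `2`, for each `s`. Then `φ` is injective. -/
theorem stmt1 {R : Type*} [CommRing R] {σ : Type*} [Finite σ]
    (φ : MvPolynomial σ R →ₐ[R] MvPolynomial σ R)
    (h : ∀ s : σ, ∀ d ∈ (φ (X s) - X s).support, 2 ≤ d.sum fun _ e => e) :
    Function.Injective φ :=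
  stmt1_general φ h
end

section
/- Let O be a discrete valuation ring with maximal ideal m and fraction field F, let F̄ be an algebraic closure of F, and let n ≥ 1. For Z ∈ Mₙ(F), the following are equivalent: (a) there exists g ∈ GLₙ(F̄) such that every entry of gZg⁻¹ − Y lies in m; (b) the minimal polynomial of Z equals its characteristic polynomial, and every coefficient of degree < n of the characteristic polynomial of Z lies in m. -/
open IsLocalRing

/-- The regular nilpotent matrix `Y` with `(i, i+1)`-entries equal to `1` and all
other entries `0`. -/
def Ymat (n : ℕ) (R : Type*) [CommRing R] : Matrix (Fin n) (Fin n) R :=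
  fun i j => if (j : ℕ) = (i : ℕ) + 1 then 1 else 0

/-!
If `g Z g⁻¹ = W` with `W ≡ Y (mod m)`, then the characteristic polynomial of `W` reduces to
`Xⁿ`, and the Krylov matrix of `W` at the last basis vector reduces to the identity, so it is
invertible; hence `Z` has a cyclic vector over `F̄`, which forces its minimal polynomial to have
degree `n`. Conversely, a regular `Z` has a cyclic vector `v` over the infinite field `F`, since
`Fⁿ` is not a finite union of the proper subspaces `ker d(Z)`, `d` running over the proper monic
divisors of the minimal polynomial. In the basis `Zⁿ⁻¹v, …, Zv, v` the matrix of `Z` is the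
companion matrix, which differs from `Y` only in its first column, made of the non-leading
coefficients of the characteristic polynomial.
-/

open Polynomial Matrix

def lastBasisVec (n : ℕ) (R : Type*) [CommRing R] : Fin n → R :=
  fun i => if (i : ℕ) + 1 = n then 1 else 0

section Ymat

variable {R S : Type*} [CommRing R] [CommRing S] {n : ℕ}

lemma Ymat_map (f : R →+* S) : (Ymat n R).map f = Ymat n S := by
  ext i j
  simp [Ymat, apply_ite f]

lemma charpoly_Ymat : (Ymat n R).charpoly = X ^ n := by
  rw [charpoly_of_isUpperTriangular]
  · simp [Ymat]
  · intro i j hji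
    simp only [Ymat, ite_eq_right_iff]
    have : (j : ℕ) < i := hji
    omega

lemma comp_lastBasisVec (f : R →+* S) : f ∘ lastBasisVec n R = lastBasisVec n S := by
  ext i
  simp [lastBasisVec, apply_ite f]

lemma Ymat_mulVec_apply (x : Fin n → R) (i : Fin n) :
    (Ymat n R *ᵥ x) i = if h : (i : ℕ) + 1 < n then x ⟨i + 1, h⟩ else 0 := by
  split_ifs with h
  · rw [mulVec, dotProduct, Finset.sum_eq_single ⟨i + 1, h⟩] <;>
      simp +contextual [Ymat, Fin.ext_iff]
  · rw [mulVec, dotProduct]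
    refine Fintype.sum_eq_zero _ fun j => ?_
    simp only [Ymat, ite_mul, one_mul, zero_mul, ite_eq_right_iff]
    omega

lemma Ymat_pow_mulVec_lastBasisVec (m : ℕ) :
    Ymat n R ^ m *ᵥ lastBasisVec n R =
      fun i : Fin n => if (i : ℕ) + m + 1 = n then (1 : R) else 0 := by
  induction m with
  | zero => ext i; simp [lastBasisVec]
  | succ m ih =>
    ext i
    rw [pow_succ', ← mulVec_mulVec, Ymat_mulVec_apply, ih]
    split_ifs <;> simp_all <;> omega

end Ymat

section Krylov

variable {R S : Type*} [CommRing R] [CommRing S] {n : ℕ}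

/-- The Krylov matrix with columns `A ^ (n - 1) *ᵥ v, …, A *ᵥ v, v`, in this order so that the
Krylov matrix of `Ymat` at the last basis vector is `1`. -/
def krylov (A : Matrix (Fin n) (Fin n) R) (v : Fin n → R) : Matrix (Fin n) (Fin n) R :=
  of fun i k => (A ^ (k.rev : ℕ) *ᵥ v) i

lemma krylov_mulVec_single (A : Matrix (Fin n) (Fin n) R) (v : Fin n → R) (k : Fin n) :
    krylov A v *ᵥ Pi.single k 1 = A ^ (k.rev : ℕ) *ᵥ v := by
  ext i
  simp [krylov]

lemma krylov_mulVec_coeff_rev (A : Matrix (Fin n) (Fin n) R) (v : Fin n → R) {p : R[X]}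
    (hp : p ∈ degreeLT R n) :
    krylov A v *ᵥ (fun k => p.coeff k.rev) = aeval A p *ᵥ v := by
  rw [aeval_def, eval₂_eq_sum, ← sum_fin _ (by simp) (mem_degreeLT.mp hp), sum_mulVec,
    ← Equiv.sum_comp Fin.revPerm]
  ext i
  simp [krylov, mulVec, dotProduct, Finset.sum_apply, ← Algebra.smul_def, smul_mulVec, mul_comm]

lemma map_krylov (f : R →+* S) (A : Matrix (Fin n) (Fin n) R) (v : Fin n → R) :
    (krylov A v).map f = krylov (A.map f) (f ∘ v) := by
  ext i k
  simp [krylov, RingHom.map_mulVec, Matrix.map_pow]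

lemma krylov_units_conj (u : (Matrix (Fin n) (Fin n) R)ˣ) (A : Matrix (Fin n) (Fin n) R)
    (v : Fin n → R) :
    krylov ((u : Matrix (Fin n) (Fin n) R) * A * (↑u⁻¹ : Matrix (Fin n) (Fin n) R)) v =
      (u : Matrix (Fin n) (Fin n) R) * krylov A ((↑u⁻¹ : Matrix (Fin n) (Fin n) R) *ᵥ v) := by
  ext i k
  simp only [krylov, Units.conj_pow, ← mulVec_mulVec, mul_apply, of_apply]
  rfl

lemma krylov_Ymat_lastBasisVec : krylov (Ymat n R) (lastBasisVec n R) = 1 := by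
  ext i k
  simp only [krylov, of_apply, Ymat_pow_mulVec_lastBasisVec, one_apply, Fin.ext_iff, Fin.val_rev]
  exact if_congr (by omega) rfl rfl

def companion (n : ℕ) (p : R[X]) : Matrix (Fin n) (Fin n) R :=
  Ymat n R - of fun i j : Fin n => if (j : ℕ) = 0 then p.coeff i.rev else 0

lemma companion_sub_Ymat_apply (p : R[X]) (i j : Fin n) :
    (companion n p - Ymat n R) i j = -if (j : ℕ) = 0 then p.coeff i.rev else 0 := by
  simp [companion]

lemma mul_krylov_eq_krylov_mul_companion (A : Matrix (Fin n) (Fin n) R) (v : Fin n → R) :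
    A * krylov A v = krylov A v * companion n A.charpoly := by
  nontriviality R
  set p := A.charpoly
  have hdeg : p.degree = n := by rw [charpoly_degree_eq_dim, Fintype.card_fin]
  have hmem : p - X ^ n ∈ degreeLT R n := by
    rw [mem_degreeLT, ← hdeg]
    refine degree_sub_lt_left (by rw [hdeg, degree_X_pow]) (charpoly_monic A).ne_zero ?_
    rw [(charpoly_monic A).leadingCoeff, (monic_X_pow n).leadingCoeff]
  refine ext_of_mulVec_single fun j => ?_
  rw [← mulVec_mulVec, ← mulVec_mulVec, krylov_mulVec_single, mulVec_mulVec, ← pow_succ',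
    mulVec_single_one]
  by_cases hj : (j : ℕ) = 0
  · have hcol : (companion n p).col j = -fun k => (p - X ^ n).coeff k.rev := by
      ext k
      simp [companion, Ymat, hj, coeff_X_pow, show n - (k + 1) ≠ n by omega]
    rw [hcol, mulVec_neg, krylov_mulVec_coeff_rev _ _ hmem, map_sub, aeval_self_charpoly,
      zero_sub, neg_mulVec, neg_neg, map_pow, aeval_X]
    congr 2
    simp only [Fin.val_rev]
    omega
  · have hcol : (companion n p).col j = Pi.single ⟨j - 1, by omega⟩ 1 := by
      ext k
      simp only [companion, col_apply, Matrix.sub_apply, of_apply, Ymat, hj, if_false, sub_zero,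
        Pi.single_apply, Fin.ext_iff]
      exact if_congr (by omega) rfl rfl
    rw [hcol, krylov_mulVec_single]
    congr 2
    simp only [Fin.val_rev]
    omega

end Krylov

section Field

variable {K : Type*} [Field K] {n : ℕ}

lemma det_krylov_eq_zero_iff (A : Matrix (Fin n) (Fin n) K) (v : Fin n → K) :
    (krylov A v).det = 0 ↔ ∃ p ∈ degreeLT K n, p ≠ 0 ∧ aeval A p *ᵥ v = 0 := by
  rw [← exists_mulVec_eq_zero_iff]
  constructor
  · rintro ⟨x, hx, hxv⟩
    set p := (degreeLTEquiv K n).symm (x ∘ Fin.rev)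
    have hcoeff : (fun k => (p : K[X]).coeff k.rev) = x := by
      ext k
      have := congrFun ((degreeLTEquiv K n).apply_symm_apply (x ∘ Fin.rev)) k.rev
      rwa [Function.comp_apply, Fin.rev_rev] at this
    refine ⟨p, p.2, fun hp => hx ?_, by rw [← krylov_mulVec_coeff_rev A v p.2, hcoeff, hxv]⟩
    rw [← hcoeff, hp]
    rfl
  · rintro ⟨p, hp, hp0, hpv⟩
    refine ⟨fun k => p.coeff k.rev, fun h0 => hp0 ?_, by rw [krylov_mulVec_coeff_rev A v hp, hpv]⟩
    rw [← degreeLTEquiv_eq_zero_iff_eq_zero hp]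
    ext k
    exact (by simpa using congrFun h0 k.rev : p.coeff k = 0)

lemma aeval_mulVec_eq_zero_of_dvd {A : Matrix (Fin n) (Fin n) K} {v : Fin n → K} {p q : K[X]}
    (hpq : p ∣ q) (hp : aeval A p *ᵥ v = 0) : aeval A q *ᵥ v = 0 := by
  obtain ⟨r, rfl⟩ := hpq
  rw [mul_comm, map_mul, ← mulVec_mulVec, hp, mulVec_zero]

lemma minpoly_eq_charpoly_of_det_krylov_ne_zero {L : Type*} [Field L] [Algebra K L]
    {A : Matrix (Fin n) (Fin n) K} {v : Fin n → L}
    (h : (krylov (A.map (algebraMap K L)) v).det ≠ 0) : minpoly K A = A.charpoly := by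
  have hmonic := minpoly.monic (isIntegral A)
  refine (eq_of_monic_of_dvd_of_natDegree_le hmonic (charpoly_monic A)
    (minpoly_dvd_charpoly A) ?_).symm
  rw [charpoly_natDegree_eq_dim, Fintype.card_fin]
  by_contra! hlt
  refine h ((det_krylov_eq_zero_iff _ _).mpr ⟨_, ?_, (hmonic.map (algebraMap K L)).ne_zero, ?_⟩)
  · rw [mem_degreeLT, degree_map]
    exact (degree_le_natDegree).trans_lt (by exact_mod_cast hlt)
  · have : aeval (A.map (algebraMap K L)) ((minpoly K A).map (algebraMap K L)) =
        (aeval A (minpoly K A)).map (algebraMap K L) := by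
      rw [aeval_map_algebraMap]
      exact aeval_algHom_apply (Algebra.ofId K L).mapMatrix A (minpoly K A)
    rw [this, minpoly.aeval, Matrix.map_zero _ (map_zero _), zero_mulVec]

lemma exists_monic_dvd_minpoly_of_det_krylov_eq_zero (A : Matrix (Fin n) (Fin n) K)
    (v : Fin n → K) (h : (krylov A v).det = 0) :
    ∃ d : K[X], (d.Monic ∧ d ∣ minpoly K A) ∧ d.natDegree < n ∧ aeval A d *ᵥ v = 0 := by
  classical
  obtain ⟨q, hq, hq0, hqv⟩ := (det_krylov_eq_zero_iff A v).mp h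
  set g := EuclideanDomain.gcd q (minpoly K A)
  have hg0 : g ≠ 0 := fun h0 => hq0 (EuclideanDomain.gcd_eq_zero_iff.mp h0).1
  have hgv : aeval A g *ᵥ v = 0 := by
    rw [show g = _ from EuclideanDomain.gcd_eq_gcd_ab _ _, map_add, add_mulVec,
      aeval_mulVec_eq_zero_of_dvd (dvd_mul_right _ _) hqv,
      aeval_mulVec_eq_zero_of_dvd (dvd_mul_right _ _) (by rw [minpoly.aeval, zero_mulVec]),
      add_zero]
  refine ⟨normalize g, ⟨monic_normalize hg0,
    normalize_dvd_iff.mpr (EuclideanDomain.gcd_dvd_right _ _)⟩, ?_,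
    aeval_mulVec_eq_zero_of_dvd (normalize_associated g).symm.dvd hgv⟩
  rw [natDegree_eq_of_degree_eq degree_normalize]
  calc g.natDegree ≤ q.natDegree := natDegree_le_of_dvd (EuclideanDomain.gcd_dvd_left _ _) hq0
    _ < n := (natDegree_lt_iff_degree_lt hq0).mpr (mem_degreeLT.mp hq)

theorem exists_det_krylov_ne_zero [Infinite K] (A : Matrix (Fin n) (Fin n) K)
    (hA : minpoly K A = A.charpoly) : ∃ v, (krylov A v).det ≠ 0 := by
  by_contra! h
  have hμ0 : minpoly K A ≠ 0 := minpoly.ne_zero (isIntegral A)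
  have := fintypeSubtypeMonicDvd (minpoly K A) hμ0
  let ker (d : {d : {d : K[X] // d.Monic ∧ d ∣ minpoly K A} // d.1.natDegree < n}) :
      Subspace K (Fin n → K) := LinearMap.ker (toLin' (aeval A d.1.1))
  obtain ⟨d, hd⟩ := Subspace.exists_eq_top_of_iUnion_eq_univ (p := ker) <|
    Set.eq_univ_of_forall fun v => by
      obtain ⟨d, hd, hdeg, hdv⟩ := exists_monic_dvd_minpoly_of_det_krylov_eq_zero A v (h v)
      exact Set.mem_iUnion.mpr ⟨⟨⟨d, hd⟩, hdeg⟩, hdv⟩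
  have hd0 : aeval A d.1.1 = 0 := toLin'.map_eq_zero_iff.mp (LinearMap.ker_eq_top.mp hd)
  have hdeg : (minpoly K A).natDegree = n := by
    rw [hA, charpoly_natDegree_eq_dim, Fintype.card_fin]
  have := natDegree_le_of_dvd (minpoly.dvd K A hd0) d.1.2.1.ne_zero
  exact d.2.not_ge (hdeg.symm.trans_le this)

theorem exists_units_conj_eq_companion [Infinite K] (A : Matrix (Fin n) (Fin n) K)
    (hA : minpoly K A = A.charpoly) :
    ∃ g : GL (Fin n) K, g * A * (↑g⁻¹ : Matrix (Fin n) (Fin n) K) = companion n A.charpoly := by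
  obtain ⟨v, hv⟩ := exists_det_krylov_ne_zero A hA
  have hB : IsUnit (krylov A v).det := hv.isUnit
  refine ⟨(nonsingInvUnit _ hB)⁻¹, ?_⟩
  rw [inv_inv]
  change (krylov A v)⁻¹ * A * krylov A v = _
  rw [mul_assoc, mul_krylov_eq_krylov_mul_companion, ← mul_assoc, nonsing_inv_mul _ hB, one_mul]

end Field

section LocalRing

variable {O : Type*} [CommRing O] [IsLocalRing O] {n : ℕ} {W : Matrix (Fin n) (Fin n) O}

lemma isUnit_det_krylov_of_map_residue (hW : W.map (residue O) = Ymat n (ResidueField O)) :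
    IsUnit (krylov W (lastBasisVec n O)).det := by
  rw [← residue_ne_zero_iff_isUnit, RingHom.map_det, RingHom.mapMatrix_apply, map_krylov, hW,
    comp_lastBasisVec, krylov_Ymat_lastBasisVec, det_one]
  exact one_ne_zero

lemma charpoly_coeff_mem_maximalIdeal_of_map_residue
    (hW : W.map (residue O) = Ymat n (ResidueField O)) {i : ℕ} (hi : i < n) :
    W.charpoly.coeff i ∈ maximalIdeal O := by
  rw [← residue_eq_zero_iff, ← coeff_map, ← charpoly_map, hW, charpoly_Ymat, coeff_X_pow,
    if_neg hi.ne]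

lemma exists_map_residue_eq_Ymat_of_sub_Ymat {L : Type*} [CommRing L] (f : O →+* L)
    {M : Matrix (Fin n) (Fin n) L} (hM : ∀ i j, ∃ c ∈ maximalIdeal O, (M - Ymat n L) i j = f c) :
    ∃ W : Matrix (Fin n) (Fin n) O, W.map (residue O) = Ymat n (ResidueField O) ∧ M = W.map f := by
  choose c hcm hc using hM
  refine ⟨Ymat n O + of c, ?_, ?_⟩
  · rw [Matrix.map_add _ (map_add _), Ymat_map, add_eq_left]
    exact Matrix.ext fun i j => (residue_eq_zero_iff _).mpr (hcm i j)
  · rw [Matrix.map_add _ (map_add f), Ymat_map, ← sub_eq_iff_eq_add']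
    exact Matrix.ext hc

lemma exists_companion_sub_Ymat {F : Type*} [CommRing F] [Algebra O F] {p : F[X]}
    (hp : ∀ i < n, ∃ c ∈ maximalIdeal O, p.coeff i = algebraMap O F c) (i j : Fin n) :
    ∃ c ∈ maximalIdeal O, (companion n p - Ymat n F) i j = algebraMap O F c := by
  rw [companion_sub_Ymat_apply]
  by_cases hj : (j : ℕ) = 0
  · obtain ⟨c, hcm, hc⟩ := hp i.rev i.rev.isLt
    exact ⟨-c, neg_mem hcm, by rw [if_pos hj, hc, map_neg]⟩
  · exact ⟨0, zero_mem _, by rw [if_neg hj, neg_zero, map_zero]⟩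

lemma minpoly_eq_charpoly_of_units_conj_eq_map {K L : Type*} [Field K] [Field L] [Algebra K L]
    {A : Matrix (Fin n) (Fin n) K} (g : GL (Fin n) L) (f : O →+* L)
    (hW : W.map (residue O) = Ymat n (ResidueField O))
    (hgA : g * A.map (algebraMap K L) * (↑g⁻¹ : Matrix (Fin n) (Fin n) L) = W.map f) :
    minpoly K A = A.charpoly := by
  refine minpoly_eq_charpoly_of_det_krylov_ne_zero
    (v := (↑g⁻¹ : Matrix (Fin n) (Fin n) L) *ᵥ (f ∘ lastBasisVec n O)) ?_
  have := ((isUnit_det_krylov_of_map_residue hW).map f).ne_zero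
  rw [RingHom.map_det, RingHom.mapMatrix_apply, map_krylov, ← hgA, krylov_units_conj,
    det_mul] at this
  exact right_ne_zero_of_mul this

end LocalRing

theorem stmt4_general {O : Type*} [CommRing O] [IsDomain O] [IsDiscreteValuationRing O]
    {F : Type*} [Field F] [Algebra O F] [IsFractionRing O F]
    (n : ℕ) (Z : Matrix (Fin n) (Fin n) F) :
    (∃ g : GL (Fin n) (AlgebraicClosure F), ∀ i j : Fin n,
        ∃ c ∈ maximalIdeal O,
          ((g : Matrix (Fin n) (Fin n) (AlgebraicClosure F)) *
              Z.map (algebraMap F (AlgebraicClosure F)) *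
              ((g⁻¹ : GL (Fin n) (AlgebraicClosure F)) :
                Matrix (Fin n) (Fin n) (AlgebraicClosure F))
            - Ymat n (AlgebraicClosure F)) i j
            = algebraMap F (AlgebraicClosure F) (algebraMap O F c)) ↔
      (minpoly F Z = Z.charpoly ∧
        ∀ i < n, ∃ c ∈ maximalIdeal O, Z.charpoly.coeff i = algebraMap O F c) := by
  set φ := algebraMap F (AlgebraicClosure F)
  constructor
  · rintro ⟨g, hg⟩
    obtain ⟨W, hW, hgZ⟩ := exists_map_residue_eq_Ymat_of_sub_Ymat (φ.comp (algebraMap O F)) hg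
    refine ⟨minpoly_eq_charpoly_of_units_conj_eq_map g _ hW hgZ, fun i hi =>
      ⟨W.charpoly.coeff i, charpoly_coeff_mem_maximalIdeal_of_map_residue hW hi, φ.injective ?_⟩⟩
    rw [← coeff_map, ← charpoly_map, ← charpoly_units_conj g, ← coe_units_inv, hgZ,
      charpoly_map, coeff_map]
    rfl
  · rintro ⟨hmin, hcoeff⟩
    have : Infinite O := not_finite_iff_infinite.mp fun _ =>
      IsDiscreteValuationRing.not_isField O (Finite.isField_of_domain O)
    have : Infinite F := Infinite.of_injective _ (IsFractionRing.injective O F)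
    obtain ⟨g, hg⟩ := exists_units_conj_eq_companion Z hmin
    refine ⟨GeneralLinearGroup.map φ g, fun i j => ?_⟩
    obtain ⟨c, hcm, hc⟩ := exists_companion_sub_Ymat hcoeff i j
    refine ⟨c, hcm, ?_⟩
    rw [← GeneralLinearGroup.map_inv, ← hc, ← Ymat_map φ]
    change ((g : Matrix (Fin n) (Fin n) F).map φ * Z.map φ *
      (↑g⁻¹ : Matrix (Fin n) (Fin n) F).map φ - _) i j = _
    rw [← Matrix.map_mul, ← Matrix.map_mul, hg, ← Matrix.map_sub _ (map_sub φ), map_apply]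

/-- Let `O` be a discrete valuation ring with maximal ideal `m` and
fraction field `F`, let `F̄` be an algebraic closure of `F`, and `n ≥ 1`. For
`Z ∈ Mₙ(F)` the following are equivalent: (a) there is `g ∈ GLₙ(F̄)` such that every
entry of `g Z g⁻¹ - Y` lies in `m`; (b) the minimal polynomial of `Z` equals its
characteristic polynomial and every coefficient of degree `< n` of the characteristic
polynomial of `Z` lies in `m`. -/
theorem stmt4 {O : Type*} [CommRing O] [IsDomain O] [IsDiscreteValuationRing O]
    {F : Type*} [Field F] [Algebra O F] [IsFractionRing O F]
    (n : ℕ) (hn : 1 ≤ n) (Z : Matrix (Fin n) (Fin n) F) :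
    (∃ g : GL (Fin n) (AlgebraicClosure F), ∀ i j : Fin n,
        ∃ c ∈ maximalIdeal O,
          ((g : Matrix (Fin n) (Fin n) (AlgebraicClosure F)) *
              Z.map (algebraMap F (AlgebraicClosure F)) *
              ((g⁻¹ : GL (Fin n) (AlgebraicClosure F)) :
                Matrix (Fin n) (Fin n) (AlgebraicClosure F))
            - Ymat n (AlgebraicClosure F)) i j
            = algebraMap F (AlgebraicClosure F) (algebraMap O F c)) ↔
      (minpoly F Z = Z.charpoly ∧
        ∀ i < n, ∃ c ∈ maximalIdeal O, Z.charpoly.coeff i = algebraMap O F c) :=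
  stmt4_general n Z
end

section
/- Let O be a discrete valuation ring with maximal ideal m, residue field κ, and fraction field F, and let n ≥ 1. Let X ∈ Mₙ(O) be a matrix whose reduction X̄ ∈ Mₙ(κ) is cyclic (there is v̄ ∈ κⁿ with v̄, X̄v̄, …, X̄^{n−1}v̄ a basis of κⁿ). Then for every A ∈ Mₙ(F) such that XA − AX ∈ Mₙ(O), there exists B ∈ Mₙ(O) with XB − BX = XA − AX; that is, [X, Mₙ(F)] ∩ Mₙ(O) = [X, Mₙ(O)]. -/
open Matrix IsLocalRing

/-! Clear denominators: `a • A = A₀` is integral for some `a = u πᵏ ≠ 0`, so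
`[X, A₀] = a • [X, A]`. If `k > 0`, then `[X̄, Ā₀] = 0`; the centralizer of the cyclic
matrix `X̄` consists of polynomials in `X̄`, and lifting the polynomial gives `Q` commuting
with `X` and `A₀ = Q + π D`. Then `[X, D] = π^(k-1) • [X, A]`, and we conclude by induction
on `k`. -/

section Cyclic

variable {K m : Type*} [CommRing K] [Fintype m] [DecidableEq m]

theorem Matrix.eq_sum_repr_smul_pow_of_commute {d : ℕ} {M C : Matrix m m K} {v : m → K}
    (b : Module.Basis (Fin d) K (m → K)) (hb : ∀ i, b i = M ^ (i : ℕ) *ᵥ v)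
    (hC : Commute M C) :
    C = ∑ i, b.repr (C *ᵥ v) i • M ^ (i : ℕ) := by
  set S := ∑ i, b.repr (C *ᵥ v) i • M ^ (i : ℕ)
  have hS : Commute M S :=
    Commute.sum_right _ _ _ fun i _ => ((Commute.refl M).pow_right i).smul_right _
  have hSv : S *ᵥ v = C *ᵥ v := by
    conv_rhs => rw [← b.sum_repr (C *ᵥ v)]
    simp only [S, sum_mulVec, smul_mulVec, hb]
  refine toLin'.injective (b.ext fun j => ?_)
  rw [toLin'_apply, toLin'_apply, hb, mulVec_mulVec, mulVec_mulVec, ← (hC.pow_left j).eq,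
    ← (hS.pow_left j).eq, ← mulVec_mulVec, ← mulVec_mulVec, hSv]

theorem Matrix.exists_commute_map_eq_of_commute_map {O : Type*} [CommRing O] {d : ℕ}
    (ρ : O →+* K) (hρ : Function.Surjective ρ) {X A : Matrix m m O} {v : m → K}
    (b : Module.Basis (Fin d) K (m → K)) (hb : ∀ i, b i = X.map ρ ^ (i : ℕ) *ᵥ v)
    (hA : Commute (X.map ρ) (A.map ρ)) :
    ∃ Q, Commute X Q ∧ Q.map ρ = A.map ρ := by
  choose c hc using fun i => hρ (b.repr (A.map ρ *ᵥ v) i)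
  refine ⟨∑ i, c i • X ^ (i : ℕ),
    Commute.sum_right _ _ _ fun i _ => ((Commute.refl X).pow_right i).smul_right _, ?_⟩
  rw [eq_sum_repr_smul_pow_of_commute b hb hA, ← RingHom.mapMatrix_apply, map_sum]
  refine Finset.sum_congr rfl fun i _ => ?_
  rw [RingHom.mapMatrix_apply, map_smul' ρ _ _ (map_mul ρ), hc]
  exact congrArg _ (map_pow ρ.mapMatrix X i)

end Cyclic

section LocalRing

variable {O m : Type*} [CommRing O] [IsLocalRing O]

theorem Matrix.exists_eq_smul_of_map_residue_eq_zero {n : Type*} {π : O}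
    (hπ : maximalIdeal O = Ideal.span {π}) {M : Matrix m n O} (hM : M.map (residue O) = 0) :
    ∃ D : Matrix m n O, M = π • D := by
  have h : ∀ i j, π ∣ M i j := fun i j => by
    rw [← Ideal.mem_span_singleton, ← hπ, ← residue_eq_zero_iff]
    exact congrFun (congrFun hM i) j
  choose D hD using h
  exact ⟨of D, ext hD⟩

theorem Matrix.exists_eq_commutator_of_commutator_eq_pow_smul [IsDomain O] [Fintype m]
    [DecidableEq m] {π : O} (hπ : maximalIdeal O = Ideal.span {π}) (hπ0 : π ≠ 0) {d : ℕ}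
    {X : Matrix m m O} {v : m → ResidueField O}
    (b : Module.Basis (Fin d) (ResidueField O) (m → ResidueField O))
    (hb : ∀ i, b i = X.map (residue O) ^ (i : ℕ) *ᵥ v) (k : ℕ) {A C : Matrix m m O}
    (h : X * A - A * X = π ^ k • C) : ∃ B, C = X * B - B * X := by
  induction k generalizing A with
  | zero => exact ⟨A, by rw [h, pow_zero, one_smul]⟩
  | succ k ih =>
    have hπ_res : residue O π = 0 :=
      (residue_eq_zero_iff π).2 (hπ ▸ Ideal.mem_span_singleton_self π)
    have hA : Commute (X.map (residue O)) (A.map (residue O)) := by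
      refine sub_eq_zero.mp ?_
      rw [← Matrix.map_mul, ← Matrix.map_mul, ← Matrix.map_sub _ (map_sub _), h,
        map_smul' _ _ _ (map_mul _), map_pow, hπ_res, zero_pow k.succ_ne_zero, zero_smul]
    obtain ⟨Q, hXQ, hQ⟩ := exists_commute_map_eq_of_commute_map _ residue_surjective b hb hA
    obtain ⟨D, hD⟩ := exists_eq_smul_of_map_residue_eq_zero hπ (M := A - Q)
      (by rw [Matrix.map_sub _ (map_sub _), hQ, sub_self])
    rw [sub_eq_iff_eq_add'] at hD
    refine ih (A := D) (smul_right_injective _ hπ0 ?_)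
    calc π • (X * D - D * X) = X * A - A * X := by
          rw [hD, mul_add, add_mul, hXQ.eq, Matrix.mul_smul, Matrix.smul_mul, smul_sub]
          abel
      _ = π • π ^ k • C := by rw [h, smul_smul, pow_succ']

end LocalRing

theorem IsDiscreteValuationRing.exists_eq_commutator_of_commutator_eq_smul {O m : Type*}
    [CommRing O] [IsDomain O] [IsDiscreteValuationRing O] [Fintype m] [DecidableEq m] {d : ℕ}
    {X : Matrix m m O} {v : m → ResidueField O}
    (b : Module.Basis (Fin d) (ResidueField O) (m → ResidueField O))
    (hb : ∀ i, b i = X.map (residue O) ^ (i : ℕ) *ᵥ v) {a : O} (ha : a ≠ 0)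
    {A C : Matrix m m O} (h : X * A - A * X = a • C) : ∃ B, C = X * B - B * X := by
  obtain ⟨π, hπ⟩ := exists_irreducible O
  obtain ⟨k, u, rfl⟩ := eq_unit_mul_pow_irreducible ha hπ
  refine exists_eq_commutator_of_commutator_eq_pow_smul hπ.maximalIdeal_eq hπ.ne_zero b hb k
    (A := (↑u⁻¹ : O) • A) ?_
  rw [Matrix.mul_smul, Matrix.smul_mul, ← smul_sub, h, smul_smul, ← mul_assoc, Units.inv_mul,
    one_mul]

theorem stmt12_general {O : Type*} [CommRing O] [IsDomain O] [IsDiscreteValuationRing O]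
    {F : Type*} [Field F] [Algebra O F] [IsFractionRing O F]
    (n : ℕ) (X : Matrix (Fin n) (Fin n) O)
    (vbar : Fin n → ResidueField O)
    (hcyc : ∃ b : Module.Basis (Fin n) (ResidueField O) (Fin n → ResidueField O),
      ∀ i : Fin n, b i = (X.map (residue O) ^ (i : ℕ)) *ᵥ vbar)
    (A : Matrix (Fin n) (Fin n) F)
    (hA : ∀ i j : Fin n, ∃ c : O,
      (X.map (algebraMap O F) * A - A * X.map (algebraMap O F)) i j
        = algebraMap O F c) :
    ∃ B : Matrix (Fin n) (Fin n) O,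
      X.map (algebraMap O F) * A - A * X.map (algebraMap O F)
        = (X * B - B * X).map (algebraMap O F) := by
  obtain ⟨b, hb⟩ := hcyc
  choose C hC using hA
  obtain ⟨a, ha⟩ := IsLocalization.exist_integer_multiples_of_finite (nonZeroDivisors O)
    fun p : Fin n × Fin n => A p.1 p.2
  choose A₀ hA₀ using ha
  have hA₀_map : (of (Function.curry A₀)).map (algebraMap O F) = (a : O) • A :=
    ext fun i j => hA₀ (i, j)
  have hcomm : X * of (Function.curry A₀) - of (Function.curry A₀) * X = (a : O) • of C := by
    refine map_injective (IsFractionRing.injective O F) ?_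
    simp only [Matrix.map_sub _ (map_sub _), Matrix.map_mul, hA₀_map]
    rw [Matrix.mul_smul, Matrix.smul_mul, ← smul_sub]
    ext i j
    rw [Matrix.smul_apply, hC, map_apply, Matrix.smul_apply, Algebra.smul_def, smul_eq_mul, map_mul,
      of_apply]
  obtain ⟨B, rfl⟩ :=
    IsDiscreteValuationRing.exists_eq_commutator_of_commutator_eq_smul b hb
      (nonZeroDivisors.coe_ne_zero a) hcomm
  exact ⟨B, ext hC⟩

/-- Let `O` be a discrete valuation ring with residue field `κ` and
fraction field `F`, and let `X ∈ Mₙ(O)` have cyclic reduction `X̄ ∈ Mₙ(κ)` (there is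
`v̄` with `v̄, X̄v̄, …, X̄^{n-1}v̄` a basis of `κⁿ`). Then every commutator
`[X, A] = XA - AX` with `A ∈ Mₙ(F)` whose entries all lie in `O` is already of the form
`[X, B]` for some `B ∈ Mₙ(O)`; that is, `[X, Mₙ(F)] ∩ Mₙ(O) = [X, Mₙ(O)]`. -/
theorem stmt12 {O : Type*} [CommRing O] [IsDomain O] [IsDiscreteValuationRing O]
    {F : Type*} [Field F] [Algebra O F] [IsFractionRing O F]
    (n : ℕ) (hn : 1 ≤ n) (X : Matrix (Fin n) (Fin n) O)
    (vbar : Fin n → ResidueField O)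
    (hcyc : ∃ b : Module.Basis (Fin n) (ResidueField O) (Fin n → ResidueField O),
      ∀ i : Fin n, b i = (X.map (residue O) ^ (i : ℕ)) *ᵥ vbar)
    (A : Matrix (Fin n) (Fin n) F)
    (hA : ∀ i j : Fin n, ∃ c : O,
      (X.map (algebraMap O F) * A - A * X.map (algebraMap O F)) i j
        = algebraMap O F c) :
    ∃ B : Matrix (Fin n) (Fin n) O,
      X.map (algebraMap O F) * A - A * X.map (algebraMap O F)
        = (X * B - B * X).map (algebraMap O F) :=
  stmt12_general n X vbar hcyc A hA
end

section
/- Let R be a commutative ring and n ≥ 1. Then Mₙ(R) is the internal direct sum of the image of ad Y and the submodule of matrices supported on the bottom row: every A ∈ Mₙ(R) can be written as A = (YB − BY) + C with B ∈ Mₙ(R) and C ∈ Mₙ(R) having all entries outside row n−1 equal to 0, and in any two such expressions A = (YB − BY) + C = (YB′ − B′Y) + C′ one has C = C′ (and hence YB − BY = YB′ − B′Y). -/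
lemma Ymul_apply {R : Type*} [CommRing R] {n : ℕ} (M : Matrix (Fin n) (Fin n) R)
    (i j : Fin n) :
    (Ymat n R * M) i j = if h : (i : ℕ) + 1 < n then M ⟨(i : ℕ) + 1, h⟩ j else 0 := by
  rw [Matrix.mul_apply]
  split
  · next h =>
    rw [Finset.sum_eq_single (⟨(i : ℕ) + 1, h⟩ : Fin n)]
    · simp [Ymat]
    · intro k _ hk
      have hk' : (k : ℕ) ≠ (i : ℕ) + 1 := fun hc => hk (Fin.ext hc)
      simp [Ymat, hk']
    · simp
  · next h =>
    apply Finset.sum_eq_zero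
    intro k _
    have hk := k.isLt
    have hk' : (k : ℕ) ≠ (i : ℕ) + 1 := by omega
    simp [Ymat, hk']

lemma mulY_apply {R : Type*} [CommRing R] {n : ℕ} (M : Matrix (Fin n) (Fin n) R)
    (i j : Fin n) :
    (M * Ymat n R) i j =
      if 1 ≤ (j : ℕ) then
        M i ⟨(j : ℕ) - 1, Nat.lt_of_le_of_lt (Nat.sub_le _ _) j.isLt⟩ else 0 := by
  rw [Matrix.mul_apply]
  split
  · next h =>
    rw [Finset.sum_eq_single (⟨(j : ℕ) - 1,
        Nat.lt_of_le_of_lt (Nat.sub_le _ _) j.isLt⟩ : Fin n)]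
    · have : (j : ℕ) = ((j : ℕ) - 1) + 1 := by omega
      simp [Ymat, ← this]
    · intro k _ hk
      have hk' : (j : ℕ) ≠ (k : ℕ) + 1 := by
        intro hc
        apply hk
        apply Fin.ext
        show (k : ℕ) = (j : ℕ) - 1
        omega
      simp [Ymat, hk']
    · simp
  · next h =>
    apply Finset.sum_eq_zero
    intro k _
    have hk' : (j : ℕ) ≠ (k : ℕ) + 1 := by omega
    simp [Ymat, hk']

/-- Entry accessor extended by zero. -/
def aEnt {n : ℕ} {R : Type*} [CommRing R] (A : Matrix (Fin n) (Fin n) R) (i j : ℕ) : R :=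
  if h : i < n ∧ j < n then A ⟨i, h.1⟩ ⟨j, h.2⟩ else 0

/-- Recursive construction of the matrix `B`. -/
def bAux {n : ℕ} {R : Type*} [CommRing R] (A : Matrix (Fin n) (Fin n) R) : ℕ → ℕ → R
  | 0, _ => 0
  | i + 1, 0 => aEnt A i 0
  | i + 1, j + 1 => aEnt A i (j + 1) + bAux A i j

/-- Let `R` be a commutative ring and `n ≥ 1`. Then `Mₙ(R)` is the
internal direct sum of the image of `ad Y` and the submodule of matrices supported on
the bottom row: every `A ∈ Mₙ(R)` can be written `A = (YB - BY) + C` with `C` supported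
on row `n - 1`, and in any two such expressions the bottom-row parts agree (hence so do
the commutator parts). -/
theorem stmt14 {R : Type*} [CommRing R] (n : ℕ) (hn : 1 ≤ n) :
    (∀ A : Matrix (Fin n) (Fin n) R,
      ∃ B C : Matrix (Fin n) (Fin n) R,
        (∀ i j : Fin n, (i : ℕ) + 1 ≠ n → C i j = 0) ∧
        A = (Ymat n R * B - B * Ymat n R) + C) ∧
    (∀ A B B' C C' : Matrix (Fin n) (Fin n) R,
      (∀ i j : Fin n, (i : ℕ) + 1 ≠ n → C i j = 0) →
      (∀ i j : Fin n, (i : ℕ) + 1 ≠ n → C' i j = 0) →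
      A = (Ymat n R * B - B * Ymat n R) + C →
      A = (Ymat n R * B' - B' * Ymat n R) + C' →
      C = C' ∧
        Ymat n R * B - B * Ymat n R = Ymat n R * B' - B' * Ymat n R) := by
  constructor
  · -- existence
    intro A
    set B : Matrix (Fin n) (Fin n) R := Matrix.of fun i j => bAux A (i : ℕ) (j : ℕ) with hB
    refine ⟨B, A - (Ymat n R * B - B * Ymat n R), ?_, by abel⟩
    intro i j hij
    have h1 : (i : ℕ) + 1 < n := lt_of_le_of_ne i.isLt hij
    have hYB : (Ymat n R * B) i j = bAux A ((i : ℕ) + 1) (j : ℕ) := by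
      rw [Ymul_apply, dif_pos h1]
      rfl
    obtain ⟨jv, hjv⟩ := j
    simp only [Matrix.sub_apply, hYB]
    cases jv with
    | zero =>
      rw [mulY_apply]
      simp only [show ¬ (1 ≤ ((⟨0, hjv⟩ : Fin n) : ℕ)) by simp, if_neg]
      show A i _ - (bAux A ((i : ℕ) + 1) 0 - 0) = 0
      have : bAux A ((i : ℕ) + 1) 0 = aEnt A (i : ℕ) 0 := rfl
      rw [this, aEnt, dif_pos ⟨i.isLt, hjv⟩]
      simp
    | succ k =>
      rw [mulY_apply]
      simp only [show (1 ≤ ((⟨k + 1, hjv⟩ : Fin n) : ℕ)) by simp, if_pos]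
      show A i _ - (bAux A ((i : ℕ) + 1) (k + 1) - B i ⟨k + 1 - 1, _⟩) = 0
      have hb : bAux A ((i : ℕ) + 1) (k + 1) = aEnt A (i : ℕ) (k + 1) + bAux A (i : ℕ) k := rfl
      have hBk : B i (⟨k + 1 - 1, Nat.lt_of_le_of_lt (Nat.sub_le _ _)
          (⟨k+1, hjv⟩ : Fin n).isLt⟩ : Fin n) = bAux A (i : ℕ) k := rfl
      rw [hb, hBk, aEnt, dif_pos ⟨i.isLt, hjv⟩]
      simp
  · -- uniqueness
    intro A B B' C C' hC hC' hab hab'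
    set D : Matrix (Fin n) (Fin n) R := B - B' with hD
    have key : Ymat n R * D - D * Ymat n R = C' - C := by
      have h := hab.symm.trans hab'
      rw [hD, Matrix.mul_sub, Matrix.sub_mul]
      have h2 : Ymat n R * B - B * Ymat n R - (Ymat n R * B' - B' * Ymat n R) = C' - C := by
        rw [sub_eq_sub_iff_add_eq_add]
        linear_combination (norm := abel) h
      linear_combination (norm := abel) h2
    -- entry relation for rows below the bottom
    have hrel : ∀ i j : Fin n, (i : ℕ) + 1 < n →
        (Ymat n R * D) i j - (D * Ymat n R) i j = 0 := by
      intro i j hi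
      have := congrFun (congrFun key i) j
      simp only [Matrix.sub_apply] at this
      rw [this, hC i j (Nat.ne_of_lt hi), hC' i j (Nat.ne_of_lt hi), sub_zero]
    -- main vanishing claim
    have hDzero : ∀ (m : ℕ) (i j : Fin n), (j : ℕ) = m → (j : ℕ) + 1 ≤ (i : ℕ) →
        D i j = 0 := by
      intro m
      induction m with
      | zero =>
        intro i j hj hij
        have hi1 : 1 ≤ (i : ℕ) := by omega
        set i' : Fin n := ⟨(i : ℕ) - 1, Nat.lt_of_le_of_lt (Nat.sub_le _ _) i.isLt⟩ with hi'
        have hlt : (i' : ℕ) + 1 < n := by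
          have := i.isLt; simp [hi']; omega
        have h := hrel i' j hlt
        rw [Ymul_apply, mulY_apply, dif_pos hlt] at h
        rw [if_neg (by omega)] at h
        have : (⟨(i' : ℕ) + 1, hlt⟩ : Fin n) = i := by
          apply Fin.ext; simp [hi']; omega
        rw [this, sub_zero] at h
        exact h
      | succ k ih =>
        intro i j hj hij
        have hi1 : 1 ≤ (i : ℕ) := by omega
        set i' : Fin n := ⟨(i : ℕ) - 1, Nat.lt_of_le_of_lt (Nat.sub_le _ _) i.isLt⟩ with hi'
        have hlt : (i' : ℕ) + 1 < n := by
          have := i.isLt; simp [hi']; omega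
        have h := hrel i' j hlt
        rw [Ymul_apply, mulY_apply, dif_pos hlt] at h
        rw [if_pos (by omega)] at h
        have hii : (⟨(i' : ℕ) + 1, hlt⟩ : Fin n) = i := by
          apply Fin.ext; simp [hi']; omega
        rw [hii, sub_eq_zero] at h
        rw [h]
        apply ih
        · simp; omega
        · simp [hi']; omega
    -- conclude C = C'
    have hCC : C = C' := by
      funext i j
      by_cases hi : (i : ℕ) + 1 = n
      · have h := congrFun (congrFun key i) j
        simp only [Matrix.sub_apply] at h
        rw [Ymul_apply, mulY_apply, dif_neg (by omega)] at h
        by_cases hj : 1 ≤ (j : ℕ)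
        · rw [if_pos hj] at h
          have hz : D i (⟨(j : ℕ) - 1, Nat.lt_of_le_of_lt (Nat.sub_le _ _) j.isLt⟩ : Fin n)
              = 0 := by
            apply hDzero ((j : ℕ) - 1)
            · rfl
            · have := j.isLt; simp; omega
          rw [hz] at h
          have h2 : C' i j - C i j = 0 := by simpa using h.symm
          exact (sub_eq_zero.mp h2).symm
        · rw [if_neg hj, sub_zero] at h
          exact (sub_eq_zero.mp h.symm).symm
      · rw [hC i j hi, hC' i j hi]
    refine ⟨hCC, ?_⟩
    have h1 : Ymat n R * B - B * Ymat n R = A - C := by rw [hab]; abel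
    have h2 : Ymat n R * B' - B' * Ymat n R = A - C' := by rw [hab']; abel
    rw [h1, h2, hCC]
end
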